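/- For every h > 0 one has C₃(h) ≤ 0 and C₄(h) ≤ 0. -/

import Mathlib

lemma amgm_aux (m₁ m₂ z : ℝ) (hm1 : 1 < m₁) (hm2 : m₂ < 0) (hz : 0 < z) :
    (m₁ - m₂) * z ≤ (1 - m₂) * z ^ m₁ + (m₁ - 1) * z ^ m₂ := by
  have hd : 0 < m₁ - m₂ := by linarith
  set w₁ : ℝ := (1 - m₂) / (m₁ - m₂) with hw₁def
  set w₂ : ℝ := (m₁ - 1) / (m₁ - m₂) with hw₂def
  have hw₁ : 0 ≤ w₁ := div_nonneg (by linarith) hd.le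
  have hw₂ : 0 ≤ w₂ := div_nonneg (by linarith) hd.le
  have hw : w₁ + w₂ = 1 := by rw [hw₁def, hw₂def, ← add_div, div_eq_one_iff_eq hd.ne']; ring
  have h := Real.geom_mean_le_arith_mean2_weighted hw₁ hw₂
    (Real.rpow_nonneg hz.le m₁) (Real.rpow_nonneg hz.le m₂) hw
  have hlhs : (z ^ m₁) ^ w₁ * (z ^ m₂) ^ w₂ = z := by
    rw [← Real.rpow_mul hz.le, ← Real.rpow_mul hz.le, ← Real.rpow_add hz]
    have : m₁ * w₁ + m₂ * w₂ = 1 := by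
      rw [hw₁def, hw₂def, mul_div_assoc', mul_div_assoc', ← add_div, div_eq_one_iff_eq hd.ne']; ring
    rw [this, Real.rpow_one]
  rw [hlhs] at h
  have e1 : (m₁ - m₂) * w₁ = 1 - m₂ := by rw [hw₁def, mul_div_assoc', mul_div_cancel_left₀ _ hd.ne']
  have e2 : (m₁ - m₂) * w₂ = m₁ - 1 := by rw [hw₂def, mul_div_assoc', mul_div_cancel_left₀ _ hd.ne']
  calc (m₁ - m₂) * z ≤ (m₁ - m₂) * (w₁ * z ^ m₁ + w₂ * z ^ m₂) :=
        mul_le_mul_of_nonneg_left h hd.le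
    _ = ((m₁ - m₂) * w₁) * z ^ m₁ + ((m₁ - m₂) * w₂) * z ^ m₂ := by ring
    _ = (1 - m₂) * z ^ m₁ + (m₁ - 1) * z ^ m₂ := by rw [e1, e2]



/-- Coefficient `C₂(h)`. -/
noncomputable def C2 (r δ κ γ m₁ m₂ α zα : ℝ) (h : ℝ) : ℝ :=
  (1 - (γ - 1) / γ) / ((m₁ - m₂) * (m₂ - (γ - 1) / γ)) *
    (m₁ * (α * δ - 1) / δ * zα ^ (-m₂) + (m₁ - 1) / r * zα ^ (1 - m₂)) *
    h ^ (1 + γ * (m₂ - 1))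

/-- Coefficient `C₅(h)`. -/
noncomputable def C5 (r δ κ γ m₁ m₂ β zβ : ℝ) (h : ℝ) : ℝ :=
  (1 - (γ - 1) / γ) / ((m₁ - m₂) * (m₁ - (γ - 1) / γ)) *
    (m₂ * (β * δ + 1) / δ * zβ ^ (-m₁) + (1 - m₂) / r * zβ ^ (1 - m₁)) *
    h ^ (1 + γ * (m₁ - 1))

/-- Coefficient `C₃(h)`. -/
noncomputable def C3 (r δ κ γ m₁ m₂ β zβ : ℝ) (h : ℝ) : ℝ :=
  C5 r δ κ γ m₁ m₂ β zβ h +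
    2 * ((γ - 1) / γ - 1) / (κ ^ 2 * (m₁ - m₂) * m₁ * (m₁ - 1) * (m₁ - (γ - 1) / γ)) *
      h ^ (1 + γ * (m₁ - 1))

/-- Coefficient `C₄(h)`. -/
noncomputable def C4 (r δ κ γ m₁ m₂ α zα : ℝ) (h : ℝ) : ℝ :=
  C2 r δ κ γ m₁ m₂ α zα h -
    2 * ((γ - 1) / γ - 1) / (κ ^ 2 * (m₁ - m₂) * m₂ * (m₂ - 1) * (m₂ - (γ - 1) / γ)) *
      h ^ (1 + γ * (m₂ - 1))

/-- Coefficient `C₁(h₁,h₂)`. -/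
noncomputable def C1 (r δ κ γ m₁ m₂ β zβ : ℝ) (h₁ h₂ : ℝ) : ℝ :=
  C3 r δ κ γ m₁ m₂ β zβ h₂ +
    2 * (1 - (γ - 1) / γ) / (κ ^ 2 * (m₁ - m₂) * m₁ * (m₁ - 1) * (m₁ - (γ - 1) / γ)) *
      h₁ ^ (1 + γ * (m₁ - 1))

/-- Coefficient `C₆(h₁,h₂)`. -/
noncomputable def C6 (r δ κ γ m₁ m₂ α zα : ℝ) (h₁ h₂ : ℝ) : ℝ :=
  C4 r δ κ γ m₁ m₂ α zα h₁ -
    2 * (1 - (γ - 1) / γ) / (κ ^ 2 * (m₁ - m₂) * m₂ * (m₂ - 1) * (m₂ - (γ - 1) / γ)) *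
      h₂ ^ (1 + γ * (m₂ - 1))

set_option maxHeartbeats 1000000 in
/-- For every `h > 0` one has `C₃(h) ≤ 0` and `C₄(h) ≤ 0`. -/
theorem C3_C4_nonpos (r δ κ γ m₁ m₂ α β zα zβ : ℝ)
    (hr : 0 < r) (hδ : 0 < δ) (hκ : 0 < κ) (hγ : 0 < γ) (hγ1 : γ ≠ 1)
    (hK : 0 < r + (δ - r) / γ + ((γ - 1) / (2 * γ ^ 2)) * κ ^ 2)
    (hQ1 : κ ^ 2 / 2 * m₁ ^ 2 + (δ - r - κ ^ 2 / 2) * m₁ - δ = 0)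
    (hQ2 : κ ^ 2 / 2 * m₂ ^ 2 + (δ - r - κ ^ 2 / 2) * m₂ - δ = 0)
    (hm1 : 1 < m₁) (hm2 : m₂ < min ((γ - 1) / γ) 0)
    (hα : 0 ≤ α) (hα' : α < 1 / δ) (hβ : 0 ≤ β)
    (hzα : zα ∈ Set.Ioc 0 (1 - α * δ))
    (hzαeq : 2 / (κ ^ 2 * m₁ * (m₁ - 1)) * zα ^ m₁ + zα / r * (m₂ - 1) + m₂ * (α - 1 / δ) = 0)
    (hzβ : zβ ∈ Set.Ici (1 + β * δ))
    (hzβeq : 2 / (κ ^ 2 * m₂ * (m₂ - 1)) * zβ ^ m₂ + zβ / r * (m₁ - 1) - m₁ * (β + 1 / δ) = 0)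
    :
    ∀ h : ℝ, 0 < h →
      C3 r δ κ γ m₁ m₂ β zβ h ≤ 0 ∧ C4 r δ κ γ m₁ m₂ α zα h ≤ 0 := by
  -- basic sign facts
  have hγ0 : γ ≠ 0 := ne_of_gt hγ
  have hκ0 : κ ≠ 0 := ne_of_gt hκ
  have hr0 : r ≠ 0 := ne_of_gt hr
  have hδ0 : δ ≠ 0 := ne_of_gt hδ
  have hm2' : m₂ < 0 := lt_of_lt_of_le hm2 (min_le_right _ _)
  have hm2g : m₂ < (γ - 1) / γ := lt_of_lt_of_le hm2 (min_le_left _ _)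
  have hg1 : (γ - 1) / γ < 1 := by rw [div_lt_one hγ]; linarith
  have h1g : 0 < 1 - (γ - 1) / γ := by linarith
  have hm1m2 : 0 < m₁ - m₂ := by linarith
  have hm1g : 0 < m₁ - (γ - 1) / γ := by linarith
  have hm2gneg : m₂ - (γ - 1) / γ < 0 := by linarith
  have hm₁0 : m₁ ≠ 0 := by positivity
  have hm₂0 : m₂ ≠ 0 := ne_of_lt hm2'
  have hm11 : m₁ - 1 ≠ 0 := by intro hc; nlinarith
  have hm21 : m₂ - 1 ≠ 0 := by intro hc; nlinarith
  have hmm : m₁ - m₂ ≠ 0 := ne_of_gt hm1m2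
  have hm1g0 : m₁ - (γ - 1) / γ ≠ 0 := ne_of_gt hm1g
  have hm2g0 : m₂ - (γ - 1) / γ ≠ 0 := ne_of_lt hm2gneg
  -- Vieta
  have hfac : (m₁ - m₂) * (κ ^ 2 / 2 * (m₁ + m₂) + (δ - r - κ ^ 2 / 2)) = 0 := by
    linear_combination hQ1 - hQ2
  have hs : κ ^ 2 / 2 * (m₁ + m₂) + (δ - r - κ ^ 2 / 2) = 0 := by
    rcases mul_eq_zero.mp hfac with hc | hc
    · exact absurd hc hmm
    · exact hc
  have hp : κ ^ 2 / 2 * (m₁ * m₂) = -δ := by linear_combination m₁ * hs - hQ1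
  have hk1 : κ ^ 2 * (m₁ - 1) * (m₂ - 1) = -(2 * r) := by linear_combination 2 * hp - 2 * hs
  -- positivity of the boundary points
  have zαpos : 0 < zα := hzα.1
  have zβpos : 0 < zβ := lt_of_lt_of_le (by positivity) hzβ
  intro h hh
  constructor
  · -- C₃ ≤ 0
    have hPβ : 0 < zβ ^ m₁ := Real.rpow_pos_of_pos zβpos m₁
    have hNβ : 0 < zβ ^ m₂ := Real.rpow_pos_of_pos zβpos m₂
    have hPβ0 : zβ ^ m₁ ≠ 0 := ne_of_gt hPβ
    have hEβ := hzβeq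
    field_simp at hEβ
    have hexpβ : 2 * zβ ^ m₁ / (κ ^ 2 * m₁ * (m₁ - 1))
          - (m₂ * (β * δ + 1) / δ + (1 - m₂) * zβ / r)
        = ((1 - m₂) * zβ ^ m₁ + (m₁ - 1) * zβ ^ m₂ - (m₁ - m₂) * zβ) / (r * m₁) := by
      field_simp
      apply mul_right_cancel₀ hm21
      linear_combination (m₁ - 1) * hEβ +
        (δ * ((m₂ - 1) * zβ ^ m₁ - (m₁ - 1) * zβ ^ m₂)) * hk1
    have hAM := amgm_aux m₁ m₂ zβ hm1 hm2' zβpos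
    have hnumβ : m₂ * (β * δ + 1) / δ + (1 - m₂) * zβ / r
        ≤ 2 * zβ ^ m₁ / (κ ^ 2 * m₁ * (m₁ - 1)) := by
      have h0 : 0 ≤ ((1 - m₂) * zβ ^ m₁ + (m₁ - 1) * zβ ^ m₂ - (m₁ - m₂) * zβ) / (r * m₁) :=
        div_nonneg (by linarith) (by positivity)
      linarith [hexpβ]
    have hkey₃ : m₂ * (β * δ + 1) / δ * (zβ ^ m₁)⁻¹ + (1 - m₂) / r * (zβ / zβ ^ m₁)
        ≤ 2 / (κ ^ 2 * m₁ * (m₁ - 1)) := by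
      have heq : m₂ * (β * δ + 1) / δ * (zβ ^ m₁)⁻¹ + (1 - m₂) / r * (zβ / zβ ^ m₁)
          = (m₂ * (β * δ + 1) / δ + (1 - m₂) * zβ / r) / zβ ^ m₁ := by
        field_simp
      rw [heq, div_le_iff₀ hPβ]
      calc m₂ * (β * δ + 1) / δ + (1 - m₂) * zβ / r
          ≤ 2 * zβ ^ m₁ / (κ ^ 2 * m₁ * (m₁ - 1)) := hnumβ
        _ = 2 / (κ ^ 2 * m₁ * (m₁ - 1)) * zβ ^ m₁ := by ring
    have hSpos : 0 < (1 - (γ - 1) / γ) / ((m₁ - m₂) * (m₁ - (γ - 1) / γ)) :=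
      div_pos h1g (mul_pos hm1m2 hm1g)
    have hscal : (1 - (γ - 1) / γ) / ((m₁ - m₂) * (m₁ - (γ - 1) / γ)) *
          (m₂ * (β * δ + 1) / δ * (zβ ^ m₁)⁻¹ + (1 - m₂) / r * (zβ / zβ ^ m₁)) +
          2 * ((γ - 1) / γ - 1) / (κ ^ 2 * (m₁ - m₂) * m₁ * (m₁ - 1) * (m₁ - (γ - 1) / γ))
        ≤ 0 := by
      calc (1 - (γ - 1) / γ) / ((m₁ - m₂) * (m₁ - (γ - 1) / γ)) *
            (m₂ * (β * δ + 1) / δ * (zβ ^ m₁)⁻¹ + (1 - m₂) / r * (zβ / zβ ^ m₁)) +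
            2 * ((γ - 1) / γ - 1) / (κ ^ 2 * (m₁ - m₂) * m₁ * (m₁ - 1) * (m₁ - (γ - 1) / γ))
          ≤ (1 - (γ - 1) / γ) / ((m₁ - m₂) * (m₁ - (γ - 1) / γ)) *
            (2 / (κ ^ 2 * m₁ * (m₁ - 1))) +
            2 * ((γ - 1) / γ - 1) / (κ ^ 2 * (m₁ - m₂) * m₁ * (m₁ - 1) * (m₁ - (γ - 1) / γ)) :=
            add_le_add_left (mul_le_mul_of_nonneg_left hkey₃ hSpos.le) _
        _ = 0 := by
            have hD1 : (m₁ - m₂) * (m₁ - (γ - 1) / γ) * (κ ^ 2 * m₁ * (m₁ - 1)) ≠ 0 :=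
              mul_ne_zero (mul_ne_zero hmm hm1g0)
                (mul_ne_zero (mul_ne_zero (pow_ne_zero 2 hκ0) hm₁0) hm11)
            have hD2 : κ ^ 2 * (m₁ - m₂) * m₁ * (m₁ - 1) * (m₁ - (γ - 1) / γ) ≠ 0 :=
              mul_ne_zero (mul_ne_zero (mul_ne_zero (mul_ne_zero (pow_ne_zero 2 hκ0) hmm)
                hm₁0) hm11) hm1g0
            rw [div_mul_div_comm, div_add_div _ _ hD1 hD2, div_eq_zero_iff]
            left; ring
    have hh' : 0 ≤ h ^ (1 + γ * (m₁ - 1)) := (Real.rpow_pos_of_pos hh _).le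
    unfold C3 C5
    rw [Real.rpow_neg zβpos.le m₁, Real.rpow_sub zβpos, Real.rpow_one]
    calc (1 - (γ - 1) / γ) / ((m₁ - m₂) * (m₁ - (γ - 1) / γ)) *
          (m₂ * (β * δ + 1) / δ * (zβ ^ m₁)⁻¹ + (1 - m₂) / r * (zβ / zβ ^ m₁)) *
          h ^ (1 + γ * (m₁ - 1)) +
          2 * ((γ - 1) / γ - 1) / (κ ^ 2 * (m₁ - m₂) * m₁ * (m₁ - 1) * (m₁ - (γ - 1) / γ)) *
          h ^ (1 + γ * (m₁ - 1))
        = ((1 - (γ - 1) / γ) / ((m₁ - m₂) * (m₁ - (γ - 1) / γ)) *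
            (m₂ * (β * δ + 1) / δ * (zβ ^ m₁)⁻¹ + (1 - m₂) / r * (zβ / zβ ^ m₁)) +
            2 * ((γ - 1) / γ - 1) / (κ ^ 2 * (m₁ - m₂) * m₁ * (m₁ - 1) * (m₁ - (γ - 1) / γ))) *
            h ^ (1 + γ * (m₁ - 1)) := by ring
      _ ≤ 0 := mul_nonpos_iff.mpr (Or.inr ⟨hscal, hh'⟩)
  · -- C₄ ≤ 0
    have hPα : 0 < zα ^ m₁ := Real.rpow_pos_of_pos zαpos m₁
    have hNα : 0 < zα ^ m₂ := Real.rpow_pos_of_pos zαpos m₂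
    have hNα0 : zα ^ m₂ ≠ 0 := ne_of_gt hNα
    have hEα := hzαeq
    field_simp at hEα
    have hexpα : m₁ * (α * δ - 1) / δ + (m₁ - 1) * zα / r + 2 * zα ^ m₂ / (κ ^ 2 * m₂ * (m₂ - 1))
        = ((1 - m₂) * zα ^ m₁ + (m₁ - 1) * zα ^ m₂ - (m₁ - m₂) * zα) / (r * -m₂) := by
      field_simp
      apply mul_right_cancel₀ hm11
      linear_combination (m₂ - 1) * hEα +
        (δ * ((m₁ - 1) * zα ^ m₂ - (m₂ - 1) * zα ^ m₁)) * hk1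
    have hAM := amgm_aux m₁ m₂ zα hm1 hm2' zαpos
    have hnumα : -(2 * zα ^ m₂ / (κ ^ 2 * m₂ * (m₂ - 1)))
        ≤ m₁ * (α * δ - 1) / δ + (m₁ - 1) * zα / r := by
      have h0 : 0 ≤ ((1 - m₂) * zα ^ m₁ + (m₁ - 1) * zα ^ m₂ - (m₁ - m₂) * zα) / (r * -m₂) :=
        div_nonneg (by linarith) (by nlinarith)
      linarith [hexpα]
    have hkey₄ : -(2 / (κ ^ 2 * m₂ * (m₂ - 1)))
        ≤ m₁ * (α * δ - 1) / δ * (zα ^ m₂)⁻¹ + (m₁ - 1) / r * (zα / zα ^ m₂) := by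
      have heq : m₁ * (α * δ - 1) / δ * (zα ^ m₂)⁻¹ + (m₁ - 1) / r * (zα / zα ^ m₂)
          = (m₁ * (α * δ - 1) / δ + (m₁ - 1) * zα / r) / zα ^ m₂ := by
        field_simp
      rw [heq, le_div_iff₀ hNα]
      calc -(2 / (κ ^ 2 * m₂ * (m₂ - 1))) * zα ^ m₂
          = -(2 * zα ^ m₂ / (κ ^ 2 * m₂ * (m₂ - 1))) := by ring
        _ ≤ m₁ * (α * δ - 1) / δ + (m₁ - 1) * zα / r := hnumα
    have hSneg : (1 - (γ - 1) / γ) / ((m₁ - m₂) * (m₂ - (γ - 1) / γ)) < 0 :=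
      div_neg_of_pos_of_neg h1g (mul_neg_of_pos_of_neg hm1m2 hm2gneg)
    have hscal : (1 - (γ - 1) / γ) / ((m₁ - m₂) * (m₂ - (γ - 1) / γ)) *
          (m₁ * (α * δ - 1) / δ * (zα ^ m₂)⁻¹ + (m₁ - 1) / r * (zα / zα ^ m₂)) -
          2 * ((γ - 1) / γ - 1) / (κ ^ 2 * (m₁ - m₂) * m₂ * (m₂ - 1) * (m₂ - (γ - 1) / γ))
        ≤ 0 := by
      have hmul := mul_le_mul_of_nonpos_left hkey₄ hSneg.le
      have hzero : (1 - (γ - 1) / γ) / ((m₁ - m₂) * (m₂ - (γ - 1) / γ)) *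
            (-(2 / (κ ^ 2 * m₂ * (m₂ - 1)))) -
            2 * ((γ - 1) / γ - 1) / (κ ^ 2 * (m₁ - m₂) * m₂ * (m₂ - 1) * (m₂ - (γ - 1) / γ))
          = 0 := by
        have hD1 : (m₁ - m₂) * (m₂ - (γ - 1) / γ) * (κ ^ 2 * m₂ * (m₂ - 1)) ≠ 0 :=
          mul_ne_zero (mul_ne_zero hmm hm2g0)
            (mul_ne_zero (mul_ne_zero (pow_ne_zero 2 hκ0) hm₂0) hm21)
        have hD2 : κ ^ 2 * (m₁ - m₂) * m₂ * (m₂ - 1) * (m₂ - (γ - 1) / γ) ≠ 0 :=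
          mul_ne_zero (mul_ne_zero (mul_ne_zero (mul_ne_zero (pow_ne_zero 2 hκ0) hmm)
            hm₂0) hm21) hm2g0
        rw [mul_neg, div_mul_div_comm, ← neg_div, div_sub_div _ _ hD1 hD2, div_eq_zero_iff]
        left; ring
      linarith
    have hh' : 0 ≤ h ^ (1 + γ * (m₂ - 1)) := (Real.rpow_pos_of_pos hh _).le
    unfold C4 C2
    rw [Real.rpow_neg zαpos.le m₂, Real.rpow_sub zαpos, Real.rpow_one]
    calc (1 - (γ - 1) / γ) / ((m₁ - m₂) * (m₂ - (γ - 1) / γ)) *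
          (m₁ * (α * δ - 1) / δ * (zα ^ m₂)⁻¹ + (m₁ - 1) / r * (zα / zα ^ m₂)) *
          h ^ (1 + γ * (m₂ - 1)) -
          2 * ((γ - 1) / γ - 1) / (κ ^ 2 * (m₁ - m₂) * m₂ * (m₂ - 1) * (m₂ - (γ - 1) / γ)) *
          h ^ (1 + γ * (m₂ - 1))
        = ((1 - (γ - 1) / γ) / ((m₁ - m₂) * (m₂ - (γ - 1) / γ)) *
            (m₁ * (α * δ - 1) / δ * (zα ^ m₂)⁻¹ + (m₁ - 1) / r * (zα / zα ^ m₂)) -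
            2 * ((γ - 1) / γ - 1) / (κ ^ 2 * (m₁ - m₂) * m₂ * (m₂ - 1) * (m₂ - (γ - 1) / γ))) *
            h ^ (1 + γ * (m₂ - 1)) := by ring
      _ ≤ 0 := mul_nonpos_iff.mpr (Or.inr ⟨hscal, hh'⟩)
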